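/- arXiv:2406.03036 — 7 statements merged into one kernel-verified Lean document; each statement's English description precedes it below -/
import Mathlib

section
/- Let G be a claw-free simple graph (G contains no induced K_{1,3}) and let F be an induced subgraph of G isomorphic to the 5-wheel W_5, with center x and rim cycle C = w_1 w_2 w_3 w_4 w_5. Then every vertex y ∈ N_G(x) \ V(F) has at least three consecutive neighbors on C (i.e., there exists an index i such that y is adjacent to w_i, w_{i+1}, w_{i+2}, indices mod 5). -/
/-- A graph is claw-free if it contains no induced `K_{1,3}`. -/
def ClawFree {V : Type*} (G : SimpleGraph V) : Prop :=
  ∀ x a b c : V, G.Adj x a → G.Adj x b → G.Adj x c →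
    a ≠ b → a ≠ c → b ≠ c →
    ¬ G.Adj a b → ¬ G.Adj a c → ¬ G.Adj b c → False

/-- `x` together with the rim `w 0, …, w 4` forms an induced 5-wheel `W₅` in `G`
with center `x` and induced rim cycle `w 0 w 1 w 2 w 3 w 4`. -/
def IsInducedW5 {V : Type*} (G : SimpleGraph V) (x : V) (w : Fin 5 → V) : Prop :=
  Function.Injective w ∧ (∀ i, G.Adj x (w i)) ∧
  (∀ i, G.Adj (w i) (w (i + 1))) ∧ (∀ i, ¬ G.Adj (w i) (w (i + 2)))

theorem statement0 {V : Type*} (G : SimpleGraph V) (hG : ClawFree G)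
    (x : V) (w : Fin 5 → V) (hW : IsInducedW5 G x w)
    (y : V) (hy : G.Adj x y) (hyF : ∀ i, y ≠ w i) :
    ∃ i : Fin 5, G.Adj y (w i) ∧ G.Adj y (w (i + 1)) ∧ G.Adj y (w (i + 2)) := by
  obtain ⟨hinj, hxw, hC, hNC⟩ := hW
  have key : ∀ i : Fin 5, G.Adj y (w i) ∨ G.Adj y (w (i + 2)) := by
    intro i
    by_contra h
    push_neg at h
    exact hG x y (w i) (w (i + 2)) hy (hxw i) (hxw (i + 2)) (hyF i) (hyF (i + 2))
      (fun e => by have := hinj e; omega) h.1 h.2 (hNC i)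
  have k0 := key 0
  have k1 := key 1
  have k2 := key 2
  have k3 := key 3
  have k4 := key 4
  have e0 : (0 : Fin 5) + 2 = 2 := rfl
  have e1 : (1 : Fin 5) + 2 = 3 := rfl
  have e2 : (2 : Fin 5) + 2 = 4 := rfl
  have e3 : (3 : Fin 5) + 2 = 0 := rfl
  have e4 : (4 : Fin 5) + 2 = 1 := rfl
  rw [e0] at k0; rw [e1] at k1; rw [e2] at k2; rw [e3] at k3; rw [e4] at k4
  set A : Fin 5 → Prop := fun i => G.Adj y (w i) with hA
  have big : (A 0 ∧ A 1 ∧ A 2) ∨ (A 1 ∧ A 2 ∧ A 3) ∨ (A 2 ∧ A 3 ∧ A 4) ∨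
      (A 3 ∧ A 4 ∧ A 0) ∨ (A 4 ∧ A 0 ∧ A 1) := by
    simp only [hA]
    tauto
  rcases big with h | h | h | h | h
  · exact ⟨0, h.1, h.2.1, h.2.2⟩
  · exact ⟨1, h.1, h.2.1, h.2.2⟩
  · exact ⟨2, h.1, h.2.1, h.2.2⟩
  · exact ⟨3, h.1, h.2.1, h.2.2⟩
  · exact ⟨4, h.1, h.2.1, h.2.2⟩
end

section
/- Let G be a claw-free simple graph and let F be an induced subgraph of G isomorphic to the 5-wheel W_5 with center x. Then for every two vertices y_1, y_2 ∈ N_G(x), the distance between y_1 and y_2 in the induced subgraph on N_G(x) is at most 2. -/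
lemma pent (p0 p1 p2 p3 p4 q0 q1 q2 q3 q4 : Prop)
    (h0 : p0 ∨ q0) (h1 : p1 ∨ q1) (h2 : p2 ∨ q2) (h3 : p3 ∨ q3) (h4 : p4 ∨ q4) :
    (p0 ∧ p2) ∨ (p1 ∧ p3) ∨ (p2 ∧ p4) ∨ (p3 ∧ p0) ∨ (p4 ∧ p1) ∨
    (q0 ∧ q2) ∨ (q1 ∧ q3) ∨ (q2 ∧ q4) ∨ (q3 ∧ q0) ∨ (q4 ∧ q1) := by
  tauto

/-- If `G` is claw-free and contains an induced `W₅` with center `x`, then any two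
vertices of `N_G(x)` are at distance at most 2 in the subgraph induced on `N_G(x)`. -/
theorem statement1 {V : Type*} (G : SimpleGraph V) (hG : ClawFree G)
    (x : V) (w : Fin 5 → V) (hW : IsInducedW5 G x w)
    (y₁ y₂ : V) (h₁ : y₁ ∈ G.neighborSet x) (h₂ : y₂ ∈ G.neighborSet x) :
    ∃ p : (G.induce (G.neighborSet x)).Walk ⟨y₁, h₁⟩ ⟨y₂, h₂⟩, p.length ≤ 2 := by
  classical
  obtain ⟨hinj, hx, hcyc, hnc⟩ := hW
  have hxy₁ : G.Adj x y₁ := h₁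
  have hxy₂ : G.Adj x y₂ := h₂
  by_cases hyy : y₁ = y₂
  · subst hyy
    exact ⟨SimpleGraph.Walk.nil, by simp [SimpleGraph.Walk.length_cons]⟩
  by_cases hadj : G.Adj y₁ y₂
  · have e1 : (G.induce (G.neighborSet x)).Adj ⟨y₁, h₁⟩ ⟨y₂, h₂⟩ := hadj
    exact ⟨SimpleGraph.Walk.cons e1 SimpleGraph.Walk.nil, by simp⟩
  · suffices hz : ∃ z, ∃ _ : z ∈ G.neighborSet x, G.Adj y₁ z ∧ G.Adj y₂ z by
      obtain ⟨z, hz, ha1, ha2⟩ := hz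
      have e1 : (G.induce (G.neighborSet x)).Adj ⟨y₁, h₁⟩ ⟨z, hz⟩ := ha1
      have e2 : (G.induce (G.neighborSet x)).Adj ⟨z, hz⟩ ⟨y₂, h₂⟩ := ha2.symm
      exact ⟨SimpleGraph.Walk.cons e1 (SimpleGraph.Walk.cons e2 SimpleGraph.Walk.nil), by simp⟩
    by_contra hno
    push_neg at hno
    set P : Fin 5 → Prop := fun i => ¬ G.Adj (w i) y₂ ∧ w i ≠ y₂ with hP
    set Q : Fin 5 → Prop := fun i => ¬ G.Adj (w i) y₁ ∧ w i ≠ y₁ with hQ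
    have hPQ : ∀ i, P i ∨ Q i := by
      intro i
      by_cases ha1 : G.Adj (w i) y₁
      · by_cases ha2 : G.Adj (w i) y₂
        · exact absurd ha2.symm (hno (w i) (hx i) ha1.symm)
        · refine Or.inl ⟨ha2, fun e => hadj (e ▸ ha1).symm⟩
      · by_cases ha2 : G.Adj (w i) y₂
        · refine Or.inr ⟨ha1, fun e => hadj (e ▸ ha2)⟩
        · by_cases e1 : w i = y₁
          · exact Or.inl ⟨e1 ▸ hadj, e1 ▸ hyy⟩
          · by_cases e2 : w i = y₂
            · exact Or.inr ⟨e2 ▸ fun h => hadj h.symm, e2 ▸ (Ne.symm hyy)⟩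
            · exact absurd (hG x y₁ y₂ (w i) hxy₁ hxy₂ (hx i) hyy
                (fun e => e1 e.symm) (fun e => e2 e.symm) hadj
                (fun h => ha1 h.symm) (fun h => ha2 h.symm)) (fun h => h)
    have key : ∀ y, G.Adj x y → ∀ i j : Fin 5, ¬ G.Adj (w i) (w j) →
        i ≠ j → (¬ G.Adj (w i) y ∧ w i ≠ y) → (¬ G.Adj (w j) y ∧ w j ≠ y) → False := by
      rintro y hxy i j hnadj hij ⟨ha, hb⟩ ⟨hc, hd⟩
      exact hG x y (w i) (w j) hxy (hx i) (hx j) (Ne.symm hb) (Ne.symm hd)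
        (fun e => hij (hinj e)) (fun h => ha h.symm) (fun h => hc h.symm) hnadj
    have h02 : ¬ G.Adj (w 0) (w 2) := by simpa using hnc 0
    have h13 : ¬ G.Adj (w 1) (w 3) := by simpa using hnc 1
    have h24 : ¬ G.Adj (w 2) (w 4) := by simpa using hnc 2
    have h30 : ¬ G.Adj (w 3) (w 0) := by simpa using hnc 3
    have h41 : ¬ G.Adj (w 4) (w 1) := by simpa using hnc 4
    have big := pent (P 0) (P 1) (P 2) (P 3) (P 4) (Q 0) (Q 1) (Q 2) (Q 3) (Q 4)
      (hPQ 0) (hPQ 1) (hPQ 2) (hPQ 3) (hPQ 4)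
    rcases big with ⟨a, b⟩ | ⟨a, b⟩ | ⟨a, b⟩ | ⟨a, b⟩ | ⟨a, b⟩ |
      ⟨a, b⟩ | ⟨a, b⟩ | ⟨a, b⟩ | ⟨a, b⟩ | ⟨a, b⟩
    · exact key y₂ hxy₂ 0 2 h02 (by decide) a b
    · exact key y₂ hxy₂ 1 3 h13 (by decide) a b
    · exact key y₂ hxy₂ 2 4 h24 (by decide) a b
    · exact key y₂ hxy₂ 3 0 h30 (by decide) a b
    · exact key y₂ hxy₂ 4 1 h41 (by decide) a b
    · exact key y₁ hxy₁ 0 2 h02 (by decide) a b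
    · exact key y₁ hxy₁ 1 3 h13 (by decide) a b
    · exact key y₁ hxy₁ 2 4 h24 (by decide) a b
    · exact key y₁ hxy₁ 3 0 h30 (by decide) a b
    · exact key y₁ hxy₁ 4 1 h41 (by decide) a b
end

section
/- Let G be a claw-free simple graph, let F be an induced subgraph of G isomorphic to W_5 with center x, and let y ∈ N_G(x) \ V(F) be a vertex that does not lie on any induced 5-cycle inside the induced subgraph ⟨N_G(x)⟩. Then every induced 5-cycle in ⟨N_G(x)⟩ contains at least 4 neighbors of y. -/
/-- `c 0 c 1 c 2 c 3 c 4` is an induced 5-cycle lying inside the neighborhood of `x`. -/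
def IsInducedC5InNbhd {V : Type*} (G : SimpleGraph V) (x : V) (c : Fin 5 → V) : Prop :=
  Function.Injective c ∧ (∀ i, G.Adj x (c i)) ∧
  (∀ i, G.Adj (c i) (c (i + 1))) ∧ (∀ i, ¬ G.Adj (c i) (c (i + 2)))

/-- If `G` is claw-free with an induced `W₅` with center `x` and rim `w`, and
`y ∈ N_G(x) \ V(F)` lies on no induced `C₅` of `⟨N_G(x)⟩`, then every induced `C₅`
of `⟨N_G(x)⟩` contains at least 4 neighbors of `y`. -/
theorem statement2 {V : Type*} (G : SimpleGraph V) [DecidableRel G.Adj] (hG : ClawFree G)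
    (x : V) (w : Fin 5 → V) (hW : IsInducedW5 G x w)
    (y : V) (hy : G.Adj x y) (hyF : ∀ i, y ≠ w i)
    (hyC5 : ∀ c : Fin 5 → V, IsInducedC5InNbhd G x c → ∀ i, c i ≠ y) :
    ∀ c : Fin 5 → V, IsInducedC5InNbhd G x c →
      4 ≤ (Finset.univ.filter fun i : Fin 5 => G.Adj y (c i)).card := by
  intro c hc
  obtain ⟨hinj, hxc, hadj, hnadj⟩ := hc
  have hne : ∀ i, c i ≠ y := hyC5 c ⟨hinj, hxc, hadj, hnadj⟩
  have hcc : ∀ i s t : Fin 5, s ≠ t → c (i + s) ≠ c (i + t) := by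
    intro i s t hst h
    exact hst (add_left_cancel (hinj h))
  -- claw argument: no two non-neighbors at distance 2
  have key2 : ∀ i : Fin 5, G.Adj y (c i) ∨ G.Adj y (c (i + 2)) := by
    intro i
    by_contra hcon
    push_neg at hcon
    obtain ⟨ha, hb⟩ := hcon
    refine hG x (c i) (c (i + 2)) y (hxc i) (hxc (i + 2)) hy
      ?_ (hne i) (hne (i + 2)) (hnadj i) (fun h => ha h.symm) (fun h => hb h.symm)
    have := hcc i 0 2 (by decide)
    simpa using this
  -- C5 construction: no two non-neighbors at distance 1
  have key1 : ∀ i : Fin 5, G.Adj y (c i) ∨ G.Adj y (c (i + 1)) := by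
    intro i
    by_contra hcon
    push_neg at hcon
    obtain ⟨ha, hb⟩ := hcon
    set d : Fin 5 → V := ![c (i + 0), c (i + 1), c (i + 2), y, c (i + 4)] with hd
    have hd5 : IsInducedC5InNbhd G x d := by
      refine ⟨?_, ?_, ?_, ?_⟩
      · intro a b hab
        fin_cases a <;> fin_cases b <;>
          first
          | rfl
          | (exfalso; revert hab; simp only [Matrix.cons_val_zero,
              Matrix.cons_val_one, Matrix.head_cons, Matrix.cons_val_two, Matrix.tail_cons,
              Matrix.cons_val_three, Matrix.cons_val_four, Matrix.cons_val_fin_one, Matrix.cons_val']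
             first
             | exact hcc i _ _ (by decide)
             | exact fun h => hne _ h.symm
             | exact fun h => hne _ h)
      · intro k
        fin_cases k <;> simp [hd] <;>
          first | exact hxc _ | exact hy
      · intro k
        fin_cases k <;> simp [hd] <;>
          first
          | simpa [add_assoc] using hadj i
          | simpa [add_assoc] using hadj (i + 1)
          | simpa [add_assoc] using hadj (i + 4)
          | exact G.adj_symm ((key2 i).resolve_left ha)
          | exact (key2 i).resolve_left ha
          | exact ((key2 (i+4)).resolve_right (by simpa [add_assoc] using hb))
          | exact G.adj_symm ((key2 (i+4)).resolve_right (by simpa [add_assoc] using hb))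
      · intro k
        fin_cases k <;> simp [hd] <;>
          first
          | simpa [add_assoc] using hnadj i
          | simpa [add_assoc] using hnadj (i + 2)
          | simpa [add_assoc] using hnadj (i + 4)
          | exact fun h => hb h.symm
          | exact fun h => ha h.symm
          | simpa using ha
          | simpa using hb
    exact hyC5 d hd5 3 rfl
  have a01 : G.Adj y (c 0) ∨ G.Adj y (c 1) := by simpa using key1 0
  have a12 : G.Adj y (c 1) ∨ G.Adj y (c 2) := by simpa using key1 1
  have a23 : G.Adj y (c 2) ∨ G.Adj y (c 3) := by simpa using key1 2
  have a34 : G.Adj y (c 3) ∨ G.Adj y (c 4) := by simpa using key1 3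
  have a40 : G.Adj y (c 4) ∨ G.Adj y (c 0) := by simpa using key1 4
  have b02 : G.Adj y (c 0) ∨ G.Adj y (c 2) := by simpa using key2 0
  have b13 : G.Adj y (c 1) ∨ G.Adj y (c 3) := by simpa using key2 1
  have b24 : G.Adj y (c 2) ∨ G.Adj y (c 4) := by simpa using key2 2
  have b30 : G.Adj y (c 3) ∨ G.Adj y (c 0) := by simpa using key2 3
  have b41 : G.Adj y (c 4) ∨ G.Adj y (c 1) := by simpa using key2 4
  rw [Finset.card_filter, Fin.sum_univ_five]
  by_cases h0 : G.Adj y (c 0) <;> by_cases h1 : G.Adj y (c 1) <;>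
    by_cases h2 : G.Adj y (c 2) <;> by_cases h3 : G.Adj y (c 3) <;>
    by_cases h4 : G.Adj y (c 4) <;> simp_all
end

section
/- Fix i ≥ 1 and let Γ_i denote the graph obtained by joining two vertex-disjoint triangles by a path with i edges (so Γ_i has i+7 vertices: triangle vertices t_1, t_2, path p_1, p_2, ..., p_{i+1}, triangle vertices t_3, t_4, with t_1 t_2 p_1 a triangle and p_{i+1} t_3 t_4 a triangle and p_1 ... p_{i+1} a path). Let G be a {K_{1,3}, Γ_i}-free graph and let x be a vertex of G such that ⟨N_G(x)⟩ is connected and noncomplete. Let G*_x be the local completion of G at x (add all edges between pairs of neighbors of x). Suppose F is an induced subgraph of G*_x isomorphic to Γ_i such that one of the two triangles of F contains an edge y_1 y_2 that is not an edge of G. Then the distance between y_1 and y_2 in the induced subgraph ⟨N_G(x)⟩ of G is exactly 3. -/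
/-- The local completion of `G` at `x`: add all missing edges between neighbors of `x`. -/
def localCompletion {V : Type*} (G : SimpleGraph V) (x : V) : SimpleGraph V where
  Adj u v := u ≠ v ∧ (G.Adj u v ∨ (G.Adj x u ∧ G.Adj x v))
  symm := ⟨fun u v h => ⟨h.1.symm, h.2.imp (fun h' => h'.symm) (fun h' => ⟨h'.2, h'.1⟩)⟩⟩
  loopless := ⟨fun u h => h.1 rfl⟩

/-- The graph `Γ_i`: two vertex-disjoint triangles joined by a path with `i` edges.
Vertex `0 = t₁`, `1 = t₂`, `2, …, i+2` are the path vertices `p₁, …, p_{i+1}`,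
`i+3 = t₃`, `i+4 = t₄`. -/
def gammaGraph (i : ℕ) : SimpleGraph (Fin (i + 5)) :=
  SimpleGraph.fromRel (fun a b =>
    ((a : ℕ) = 0 ∧ (b : ℕ) = 1) ∨ ((a : ℕ) = 0 ∧ (b : ℕ) = 2) ∨
    ((a : ℕ) = 1 ∧ (b : ℕ) = 2) ∨
    (2 ≤ (a : ℕ) ∧ (b : ℕ) = (a : ℕ) + 1 ∧ (b : ℕ) ≤ i + 2) ∨
    ((a : ℕ) = i + 2 ∧ (b : ℕ) = i + 3) ∨ ((a : ℕ) = i + 2 ∧ (b : ℕ) = i + 4) ∨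
    ((a : ℕ) = i + 3 ∧ (b : ℕ) = i + 4))

/-- `G` contains no induced subgraph isomorphic to `Γ_i`. -/
def GammaFree {V : Type*} (i : ℕ) (G : SimpleGraph V) : Prop :=
  IsEmpty (gammaGraph i ↪g G)

/-! ### Auxiliary machinery -/

/-- The edge relation of `Γ_i` on natural-number indices, oriented `j < k`. -/
def gRel (i j k : ℕ) : Prop :=
  (j = 0 ∧ k = 1) ∨ (j = 0 ∧ k = 2) ∨ (j = 1 ∧ k = 2) ∨
  (2 ≤ j ∧ k = j + 1 ∧ k ≤ i + 2) ∨
  (j = i + 2 ∧ k = i + 3) ∨ (j = i + 2 ∧ k = i + 4) ∨ (j = i + 3 ∧ k = i + 4)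

lemma gamma_adj (i : ℕ) (a b : Fin (i+5)) :
    (gammaGraph i).Adj a b ↔ ((a:ℕ) ≠ (b:ℕ) ∧ (gRel i a b ∨ gRel i b a)) := by
  simp [gammaGraph, SimpleGraph.fromRel_adj, gRel, Fin.ext_iff, Ne, -Fin.val_eq_zero_iff]

lemma gRel_lt {i j k : ℕ} (h : gRel i j k) : j < k := by unfold gRel at h; omega

/-- A compact characterization of the (unordered) adjacency of `Γ_i` on indices. -/
lemma gRel_char (i j k : ℕ) (hi : 1 ≤ i) (hjk : j < k) (hk : k ≤ i + 4) :
    (gRel i j k ∨ gRel i k j) ↔ (k = j + 1 ∨ (j = 0 ∧ k = 2) ∨ (j = i + 2 ∧ k = i + 4)) := by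
  constructor
  · intro h
    rcases h with h | h
    · unfold gRel at h; omega
    · unfold gRel at h; omega
  · intro h
    left
    rcases h with h | ⟨h0, h2⟩ | ⟨hj2, hk4⟩
    · subst h
      unfold gRel
      rcases Nat.lt_or_ge j 2 with hj | hj
      · interval_cases j
        · exact Or.inl ⟨rfl, rfl⟩
        · exact Or.inr (Or.inr (Or.inl ⟨rfl, rfl⟩))
      · rcases Nat.lt_or_ge (j+1) (i+3) with hj' | hj'
        · exact Or.inr (Or.inr (Or.inr (Or.inl ⟨hj, rfl, by omega⟩)))
        · rcases Nat.lt_or_ge (j+1) (i+4) with hj'' | hj''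
          · exact Or.inr (Or.inr (Or.inr (Or.inr (Or.inl ⟨by omega, by omega⟩))))
          · exact Or.inr (Or.inr (Or.inr (Or.inr (Or.inr (Or.inr ⟨by omega, by omega⟩)))))
    · exact Or.inr (Or.inl ⟨h0, h2⟩)
    · exact Or.inr (Or.inr (Or.inr (Or.inr (Or.inr (Or.inl ⟨hj2, hk4⟩)))))

def gammaMap {V : Type*} (p q r : V) (w : ℕ → V) (k : ℕ) : V :=
  if k = 0 then p else if k = 1 then q else if k = 2 then r else w k

lemma gammaMap_zero {V : Type*} (p q r : V) (w : ℕ → V) : gammaMap p q r w 0 = p := rfl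
lemma gammaMap_one {V : Type*} (p q r : V) (w : ℕ → V) : gammaMap p q r w 1 = q := rfl
lemma gammaMap_two {V : Type*} (p q r : V) (w : ℕ → V) : gammaMap p q r w 2 = r := rfl
lemma gammaMap_ge {V : Type*} (p q r : V) (w : ℕ → V) (k : ℕ) (hk : 3 ≤ k) :
    gammaMap p q r w k = w k := by
  unfold gammaMap
  rw [if_neg (by omega), if_neg (by omega), if_neg (by omega)]

/-- Given a triangle `p q r` and an induced chain `w 3, …, w (i+4)` (a path ending in a
triangle), with `r` adjacent exactly to `w 3`, we obtain an induced copy of `Γ_i`,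
contradicting `Γ_i`-freeness. -/
lemma buildGammaEmb {V : Type*} (i : ℕ) (hi : 1 ≤ i) (G : SimpleGraph V)
    (hgamma : GammaFree i G) (p q r : V) (w : ℕ → V)
    (hw : ∀ j k, 3 ≤ j → j < k → k ≤ i + 4 →
      (G.Adj (w j) (w k) ↔ (k = j + 1 ∨ (j = i + 2 ∧ k = i + 4))))
    (hinj : ∀ j k, 3 ≤ j → j < k → k ≤ i + 4 → w j ≠ w k)
    (hpq : G.Adj p q) (hpr : G.Adj p r) (hqr : G.Adj q r)
    (hp : ∀ k, 3 ≤ k → k ≤ i + 4 → ¬ G.Adj p (w k))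
    (hq : ∀ k, 3 ≤ k → k ≤ i + 4 → ¬ G.Adj q (w k))
    (hr3 : G.Adj r (w 3))
    (hrk : ∀ k, 4 ≤ k → k ≤ i + 4 → ¬ G.Adj r (w k))
    (hpw : ∀ k, 3 ≤ k → k ≤ i + 4 → p ≠ w k)
    (hqw : ∀ k, 3 ≤ k → k ≤ i + 4 → q ≠ w k)
    (hrw : ∀ k, 3 ≤ k → k ≤ i + 4 → r ≠ w k) : False := by
  classical
  have key_inj : ∀ j k, j < k → k ≤ i + 4 → gammaMap p q r w j ≠ gammaMap p q r w k := by
    intro j k hjk hk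
    rcases Nat.lt_or_ge j 3 with hj3 | hj3
    · rcases Nat.lt_or_ge k 3 with hk3 | hk3
      · interval_cases j <;> interval_cases k <;>
          simp only [gammaMap_zero, gammaMap_one, gammaMap_two] <;>
          first | exact hpq.ne | exact hpr.ne | exact hqr.ne | omega
      · rw [gammaMap_ge p q r w k hk3]
        interval_cases j
        · exact (gammaMap_zero p q r w) ▸ hpw k hk3 hk
        · exact (gammaMap_one p q r w) ▸ hqw k hk3 hk
        · exact (gammaMap_two p q r w) ▸ hrw k hk3 hk
    · rw [gammaMap_ge p q r w j hj3, gammaMap_ge p q r w k (by omega)]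
      exact hinj j k hj3 hjk hk
  have key_adj : ∀ j k, j < k → k ≤ i + 4 →
      (G.Adj (gammaMap p q r w j) (gammaMap p q r w k) ↔
        (k = j + 1 ∨ (j = 0 ∧ k = 2) ∨ (j = i + 2 ∧ k = i + 4))) := by
    intro j k hjk hk
    rcases Nat.lt_or_ge j 3 with hj3 | hj3
    · rcases Nat.lt_or_ge k 3 with hk3 | hk3
      · interval_cases j <;> interval_cases k
        · exact iff_of_true ((gammaMap_zero p q r w) ▸ (gammaMap_one p q r w) ▸ hpq) (by omega)
        · exact iff_of_true ((gammaMap_zero p q r w) ▸ (gammaMap_two p q r w) ▸ hpr) (by omega)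
        · exact iff_of_true ((gammaMap_one p q r w) ▸ (gammaMap_two p q r w) ▸ hqr) (by omega)
      · rw [gammaMap_ge p q r w k hk3]
        interval_cases j
        · exact iff_of_false ((gammaMap_zero p q r w) ▸ hp k hk3 hk) (by omega)
        · exact iff_of_false ((gammaMap_one p q r w) ▸ hq k hk3 hk) (by omega)
        · rw [gammaMap_two]
          by_cases hk4 : k = 3
          · subst hk4
            exact iff_of_true hr3 (by omega)
          · exact iff_of_false (hrk k (by omega) hk) (by omega)
    · rw [gammaMap_ge p q r w j hj3, gammaMap_ge p q r w k (by omega)]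
      rw [hw j k hj3 hjk hk]
      omega
  let m : Fin (i + 5) → V := fun k => gammaMap p q r w (k : ℕ)
  have minj : Function.Injective m := by
    intro a b hab
    by_contra hne
    have hne' : (a : ℕ) ≠ (b : ℕ) := fun h => hne (Fin.ext h)
    rcases Nat.lt_or_ge (a : ℕ) (b : ℕ) with h | h
    · exact key_inj _ _ h (by omega) hab
    · exact key_inj _ _ (by omega) (by omega) hab.symm
  have madj : ∀ a b : Fin (i + 5), G.Adj (m a) (m b) ↔ (gammaGraph i).Adj a b := by
    intro a b
    rw [gamma_adj]
    rcases lt_trichotomy (a : ℕ) (b : ℕ) with h | h | h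
    · rw [show m a = gammaMap p q r w (a:ℕ) from rfl, show m b = gammaMap p q r w (b:ℕ) from rfl,
        key_adj _ _ h (by omega)]
      rw [gRel_char i a b hi h (by omega)]
      omega
    · constructor
      · intro hg; exact absurd (Fin.ext h ▸ hg) G.irrefl
      · intro hg; exact absurd h hg.1
    · rw [G.adj_comm, show m a = gammaMap p q r w (a:ℕ) from rfl,
        show m b = gammaMap p q r w (b:ℕ) from rfl, key_adj _ _ h (by omega)]
      have hch := gRel_char i (b : ℕ) (a : ℕ) hi h (by omega)
      constructor
      · intro hs
        exact ⟨by omega, (hch.mpr hs).symm⟩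
      · intro hg
        exact hch.mp hg.2.symm
  exact hgamma.elim ⟨⟨m, minj⟩, fun {a b} => madj a b⟩

lemma lc_of_adj {V : Type*} {G : SimpleGraph V} {x u v : V} (h : G.Adj u v) :
    (localCompletion G x).Adj u v := ⟨h.ne, Or.inl h⟩

/-- Core lemma, inner-edge case: the new edge of the triangle joins `u` and `w 2`,
and `z` is a common `G`-neighbor of its endpoints lying in `N(x)`. -/
lemma coreInner {V : Type*} (i : ℕ) (hi : 1 ≤ i) (G : SimpleGraph V)
    (hclaw : ClawFree G) (hgamma : GammaFree i G) (x : V) (u : V) (w : ℕ → V)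
    (c1 : ∀ k, 2 ≤ k → k ≤ i + 4 → ((localCompletion G x).Adj u (w k) ↔ k = 2))
    (c4 : ∀ j k, 2 ≤ j → j < k → k ≤ i + 4 →
      ((localCompletion G x).Adj (w j) (w k) ↔ (k = j + 1 ∨ (j = i + 2 ∧ k = i + 4))))
    (c5u : ∀ k, 2 ≤ k → k ≤ i + 4 → u ≠ w k)
    (c5w : ∀ j k, 2 ≤ j → j < k → k ≤ i + 4 → w j ≠ w k)
    (hnewB : ¬ G.Adj u (w 2))
    (z : V) (hxz : G.Adj x z) (hzu : G.Adj z u) (hzw : G.Adj z (w 2)) : False := by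
  have hG2 : (localCompletion G x).Adj u (w 2) := (c1 2 le_rfl (by omega)).mpr rfl
  have hxu : G.Adj x u ∧ G.Adj x (w 2) := (hG2.2).resolve_left hnewB
  have xk : ∀ k, 3 ≤ k → k ≤ i + 4 → ¬ G.Adj x (w k) := by
    intro k hk hk' hadj
    have : (localCompletion G x).Adj u (w k) := ⟨c5u k (by omega) hk', Or.inr ⟨hxu.1, hadj⟩⟩
    rw [c1 k (by omega) hk'] at this
    omega
  have xw : ∀ k, 3 ≤ k → k ≤ i + 4 → x ≠ w k := by
    intro k hk hk' he
    have : (localCompletion G x).Adj u (w k) := by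
      refine ⟨c5u k (by omega) hk', Or.inl ?_⟩
      rw [← he]; exact hxu.1.symm
    rw [c1 k (by omega) hk'] at this
    omega
  have zk : ∀ k, 4 ≤ k → k ≤ i + 4 → ¬ G.Adj z (w k) := by
    intro k hk hk' hadj
    refine hclaw z u (w 2) (w k) hzu hzw hadj hG2.1 (c5u k (by omega) hk')
      (c5w 2 k le_rfl (by omega) hk') hnewB ?_ ?_
    · intro h
      have := lc_of_adj (x := x) h
      rw [c1 k (by omega) hk'] at this
      omega
    · intro h
      have := lc_of_adj (x := x) h
      rw [c4 2 k le_rfl (by omega) hk'] at this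
      omega
  have zw : ∀ k, 2 ≤ k → k ≤ i + 4 → z ≠ w k := by
    intro k hk hk' he
    have h2 : (localCompletion G x).Adj u (w k) := by
      refine ⟨c5u k hk hk', Or.inl ?_⟩
      rw [← he]; exact hzu.symm
    rw [c1 k hk hk'] at h2
    subst h2
    exact hzw.ne (he ▸ rfl)
  have hwG : ∀ j k, 3 ≤ j → j < k → k ≤ i + 4 →
      (G.Adj (w j) (w k) ↔ (k = j + 1 ∨ (j = i + 2 ∧ k = i + 4))) := by
    intro j k hj hjk hk
    rw [← c4 j k (by omega) hjk hk]
    constructor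
    · exact lc_of_adj
    · intro h
      rcases h.2 with h' | h'
      · exact h'
      · exact absurd h'.1 (xk j hj (by omega))
  have hw2w3 : G.Adj (w 2) (w 3) := by
    have h2 : (localCompletion G x).Adj (w 2) (w 3) := by
      rw [c4 2 3 le_rfl (by omega) (by omega)]; omega
    rcases h2.2 with h' | h'
    · exact h'
    · exact absurd h'.2 (xk 3 le_rfl (by omega))
  by_cases hz3 : G.Adj z (w 3)
  · -- triangle `u x z`, path `z w3 … w_{i+2}`, end triangle
    refine buildGammaEmb i hi G hgamma u x z w hwG
      (fun j k hj hjk hk => c5w j k (by omega) hjk hk)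
      hxu.1.symm hzu.symm hxz
      (fun k hk hk' h => by
        have := lc_of_adj (x := x) h
        rw [c1 k (by omega) hk'] at this
        omega)
      xk hz3 zk (fun k hk hk' => c5u k (by omega) hk') xw
      (fun k hk hk' => zw k (by omega) hk')
  · -- triangle `x z (w 2)`, path `w2 w3 … w_{i+2}`, end triangle
    refine buildGammaEmb i hi G hgamma x z (w 2) w hwG
      (fun j k hj hjk hk => c5w j k (by omega) hjk hk)
      hxz hxu.2 hzw xk
      (fun k hk hk' h => by
        rcases Nat.lt_or_ge k 4 with h4 | h4
        · have hk3 : k = 3 := by omega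
          subst hk3
          exact hz3 h
        · exact zk k h4 hk' h)
      hw2w3
      (fun k hk hk' h => by
        have := lc_of_adj (x := x) h
        rw [c4 2 k le_rfl (by omega) hk'] at this
        omega)
      xw (fun k hk hk' => zw k (by omega) hk')
      (fun k hk hk' => c5w 2 k le_rfl (by omega) hk')

/-- Core lemma, outer-edge case: the new edge of the triangle joins `u` and `v`.
This situation is contradictory outright. -/
lemma coreOuter {V : Type*} (i : ℕ) (hi : 1 ≤ i) (G : SimpleGraph V)
    (hclaw : ClawFree G) (hgamma : GammaFree i G) (x : V) (u v : V) (w : ℕ → V)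
    (c3 : (localCompletion G x).Adj u v)
    (c1 : ∀ k, 2 ≤ k → k ≤ i + 4 → ((localCompletion G x).Adj u (w k) ↔ k = 2))
    (c2 : ∀ k, 2 ≤ k → k ≤ i + 4 → ((localCompletion G x).Adj v (w k) ↔ k = 2))
    (c4 : ∀ j k, 2 ≤ j → j < k → k ≤ i + 4 →
      ((localCompletion G x).Adj (w j) (w k) ↔ (k = j + 1 ∨ (j = i + 2 ∧ k = i + 4))))
    (c5u : ∀ k, 2 ≤ k → k ≤ i + 4 → u ≠ w k)
    (c5v : ∀ k, 2 ≤ k → k ≤ i + 4 → v ≠ w k)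
    (c5w : ∀ j k, 2 ≤ j → j < k → k ≤ i + 4 → w j ≠ w k)
    (hnewA : ¬ G.Adj u v) : False := by
  have hxuv : G.Adj x u ∧ G.Adj x v := (c3.2).resolve_left hnewA
  have hG2u : (localCompletion G x).Adj u (w 2) := (c1 2 le_rfl (by omega)).mpr rfl
  have hG2v : (localCompletion G x).Adj v (w 2) := (c2 2 le_rfl (by omega)).mpr rfl
  have xk : ∀ k, 3 ≤ k → k ≤ i + 4 → ¬ G.Adj x (w k) := by
    intro k hk hk' hadj
    have : (localCompletion G x).Adj u (w k) := ⟨c5u k (by omega) hk', Or.inr ⟨hxuv.1, hadj⟩⟩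
    rw [c1 k (by omega) hk'] at this
    omega
  have xw : ∀ k, 3 ≤ k → k ≤ i + 4 → x ≠ w k := by
    intro k hk hk' he
    have : (localCompletion G x).Adj u (w k) := by
      refine ⟨c5u k (by omega) hk', Or.inl ?_⟩
      rw [← he]; exact hxuv.1.symm
    rw [c1 k (by omega) hk'] at this
    omega
  have hwG : ∀ j k, 3 ≤ j → j < k → k ≤ i + 4 →
      (G.Adj (w j) (w k) ↔ (k = j + 1 ∨ (j = i + 2 ∧ k = i + 4))) := by
    intro j k hj hjk hk
    rw [← c4 j k (by omega) hjk hk]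
    constructor
    · exact lc_of_adj
    · intro h
      rcases h.2 with h' | h'
      · exact h'
      · exact absurd h'.1 (xk j hj (by omega))
  have hw2w3 : G.Adj (w 2) (w 3) := by
    have h2 : (localCompletion G x).Adj (w 2) (w 3) := by
      rw [c4 2 3 le_rfl (by omega) (by omega)]; omega
    rcases h2.2 with h' | h'
    · exact h'
    · exact absurd h'.2 (xk 3 le_rfl (by omega))
  have hu3 : ¬ G.Adj u (w 3) := by
    intro h
    have := lc_of_adj (x := x) h
    rw [c1 3 (by omega) (by omega)] at this
    omega
  have hv3 : ¬ G.Adj v (w 3) := by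
    intro h
    have := lc_of_adj (x := x) h
    rw [c2 3 (by omega) (by omega)] at this
    omega
  by_cases hB : G.Adj u (w 2) <;> by_cases hC : G.Adj v (w 2)
  · -- both triangle legs genuine: claw at `w 2` against `u, v, w 3`
    exact hclaw (w 2) u v (w 3) hB.symm hC.symm hw2w3 c3.ne
      (fun h => (c5u 3 (by omega) (by omega)) h)
      (fun h => (c5v 3 (by omega) (by omega)) h)
      hnewA hu3 hv3
  · -- `u (w 2)` genuine, `v (w 2)` new: triangle `x u (w 2)` plus chain
    have hxw2 : G.Adj x (w 2) := ((hG2v.2).resolve_left hC).2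
    refine buildGammaEmb i hi G hgamma x u (w 2) w hwG
      (fun j k hj hjk hk => c5w j k (by omega) hjk hk)
      hxuv.1 hxw2 hB xk
      (fun k hk hk' h => by
        have := lc_of_adj (x := x) h
        rw [c1 k (by omega) hk'] at this
        omega)
      hw2w3
      (fun k hk hk' h => by
        have := lc_of_adj (x := x) h
        rw [c4 2 k le_rfl (by omega) hk'] at this
        omega)
      xw (fun k hk hk' => c5u k (by omega) hk')
      (fun k hk hk' => c5w 2 k le_rfl (by omega) hk')
  · -- `v (w 2)` genuine, `u (w 2)` new: triangle `x v (w 2)` plus chain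
    have hxw2 : G.Adj x (w 2) := ((hG2u.2).resolve_left hB).2
    refine buildGammaEmb i hi G hgamma x v (w 2) w hwG
      (fun j k hj hjk hk => c5w j k (by omega) hjk hk)
      hxuv.2 hxw2 hC xk
      (fun k hk hk' h => by
        have := lc_of_adj (x := x) h
        rw [c2 k (by omega) hk'] at this
        omega)
      hw2w3
      (fun k hk hk' h => by
        have := lc_of_adj (x := x) h
        rw [c4 2 k le_rfl (by omega) hk'] at this
        omega)
      xw (fun k hk hk' => c5v k (by omega) hk')
      (fun k hk hk' => c5w 2 k le_rfl (by omega) hk')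
  · -- all triangle edges new: claw at `x` against `u, v, w 2`
    have hxw2 : G.Adj x (w 2) := ((hG2u.2).resolve_left hB).2
    exact hclaw x u v (w 2) hxuv.1 hxuv.2 hxw2 c3.ne
      (c5u 2 le_rfl (by omega)) (c5v 2 le_rfl (by omega)) hnewA hB hC

/-- Combined core lemma: `F 0, …, F (i+4)` is an induced copy of `Γ_i` in the local
completion, the edge `F a – F b` (with `a < b ≤ 2`) is new, and `z ∈ N(x)` is a common
`G`-neighbor of `F a` and `F b`.  This is contradictory. -/
lemma mainCore {V : Type*} (i : ℕ) (hi : 1 ≤ i) (G : SimpleGraph V)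
    (hclaw : ClawFree G) (hgamma : GammaFree i G) (x : V) (F : ℕ → V)
    (hFadj : ∀ j k, j < k → k ≤ i + 4 → ((localCompletion G x).Adj (F j) (F k) ↔
      (k = j + 1 ∨ (j = 0 ∧ k = 2) ∨ (j = i + 2 ∧ k = i + 4))))
    (hFinj : ∀ j k, j < k → k ≤ i + 4 → F j ≠ F k)
    (a b : ℕ) (hab : a < b) (hb : b ≤ 2)
    (hnew : ¬ G.Adj (F a) (F b))
    (z : V) (hxz : G.Adj x z) (hz1 : G.Adj z (F a)) (hz2 : G.Adj z (F b)) : False := by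
  have hc4 : ∀ j k, 2 ≤ j → j < k → k ≤ i + 4 →
      ((localCompletion G x).Adj (F j) (F k) ↔ (k = j + 1 ∨ (j = i + 2 ∧ k = i + 4))) := by
    intro j k hj hjk hk
    rw [hFadj j k hjk hk]
    omega
  have hc5w : ∀ j k, 2 ≤ j → j < k → k ≤ i + 4 → F j ≠ F k :=
    fun j k _ hjk hk => hFinj j k hjk hk
  have hb12 : b = 1 ∨ b = 2 := by omega
  rcases hb12 with hb1 | hb2
  · -- new edge F0–F1 : outer case
    have ha : a = 0 := by omega
    subst hb1
    subst ha
    refine coreOuter i hi G hclaw hgamma x (F 0) (F 1) F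
      ((hFadj 0 1 (by omega) (by omega)).mpr (by omega))
      (fun k hk hk' => by rw [hFadj 0 k (by omega) hk']; omega)
      (fun k hk hk' => by rw [hFadj 1 k (by omega) hk']; omega)
      hc4
      (fun k hk hk' => hFinj 0 k (by omega) hk')
      (fun k hk hk' => hFinj 1 k (by omega) hk')
      hc5w hnew
  · -- new edge Fa–F2 with a ∈ {0, 1} : inner case
    subst hb2
    refine coreInner i hi G hclaw hgamma x (F a) F
      (fun k hk hk' => by
        rw [hFadj a k (by omega) hk']
        omega)
      hc4
      (fun k hk hk' => hFinj a k (by omega) hk')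
      hc5w hnew z hxz hz1 hz2

lemma induce_adj' {V : Type*} (G : SimpleGraph V) (S : Set V) (a b : S) :
    (G.induce S).Adj a b ↔ G.Adj a b := by
  simp [SimpleGraph.comap_adj]

lemma walk_len2 {V : Type*} {G : SimpleGraph V} {u v : V} (p : G.Walk u v)
    (h : p.length = 2) : ∃ m, G.Adj u m ∧ G.Adj m v := by
  cases p with
  | nil => simp at h
  | cons h1 q =>
    cases q with
    | nil => simp at h
    | cons h2 r =>
      cases r with
      | nil => exact ⟨_, h1, h2⟩
      | cons h3 s =>
        simp only [SimpleGraph.Walk.length_cons] at h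
        omega

/-- In a claw-free graph, any two vertices of `⟨N(x)⟩` in the same component are at
distance at most 3. -/
lemma dist_le_three {V : Type*} (G : SimpleGraph V) (hclaw : ClawFree G) (x : V)
    (s t : ↥(G.neighborSet x)) (hr : (G.induce (G.neighborSet x)).Reachable s t) :
    (G.induce (G.neighborSet x)).dist s t ≤ 3 := by
  by_contra hlt
  push_neg at hlt
  obtain ⟨p, hp⟩ := hr.exists_walk_length_eq_dist
  cases p with
  | nil => simp at hp; rw [SimpleGraph.dist_self] at hlt; omega
  | cons h1 p =>
    cases p with
    | nil => simp at hp; omega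
    | cons h2 p =>
      cases p with
      | nil => simp at hp; omega
      | cons h3 p =>
        cases p with
        | nil => simp at hp; omega
        | cons h4 q =>
          rename_i c1 c2 c3 c4
          simp only [SimpleGraph.Walk.length_cons] at hp
          -- `s ~ c1 ~ c2 ~ c3 ~ c4`, `q : Walk c4 t`
          have hd := hp
          have n1 : ¬ (G.induce (G.neighborSet x)).Adj s c2 := by
            intro hA
            have := SimpleGraph.dist_le ((hA.toWalk).append ((SimpleGraph.Walk.cons h3
              (SimpleGraph.Walk.cons h4 q))))
            simp only [SimpleGraph.Walk.length_append, SimpleGraph.Walk.length_cons,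
              SimpleGraph.Walk.length_nil] at this
            omega
          have n2 : ¬ (G.induce (G.neighborSet x)).Adj s c4 := by
            intro hA
            have := SimpleGraph.dist_le ((hA.toWalk).append q)
            simp only [SimpleGraph.Walk.length_append, SimpleGraph.Walk.length_cons,
              SimpleGraph.Walk.length_nil] at this
            omega
          have n3 : ¬ (G.induce (G.neighborSet x)).Adj c2 c4 := by
            intro hA
            have := SimpleGraph.dist_le ((SimpleGraph.Walk.cons h1 (SimpleGraph.Walk.cons h2
              ((hA.toWalk).append q))))
            simp only [SimpleGraph.Walk.length_append, SimpleGraph.Walk.length_cons,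
              SimpleGraph.Walk.length_nil] at this
            omega
          have e1 : s ≠ c2 := by
            intro he
            have := SimpleGraph.dist_le ((SimpleGraph.Walk.cons h3
              (SimpleGraph.Walk.cons h4 q)).copy he.symm rfl)
            simp only [SimpleGraph.Walk.length_copy, SimpleGraph.Walk.length_cons] at this
            omega
          have e2 : s ≠ c4 := by
            intro he
            have := SimpleGraph.dist_le (q.copy he.symm rfl)
            simp only [SimpleGraph.Walk.length_copy] at this
            omega
          have e3 : c2 ≠ c4 := by
            intro he
            have := SimpleGraph.dist_le (SimpleGraph.Walk.cons h1
              (SimpleGraph.Walk.cons h2 (q.copy he.symm rfl)))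
            simp only [SimpleGraph.Walk.length_copy, SimpleGraph.Walk.length_cons] at this
            omega
          exact hclaw x s.1 c2.1 c4.1 s.2 c2.2 c4.2
            (fun h => e1 (Subtype.ext h)) (fun h => e2 (Subtype.ext h))
            (fun h => e3 (Subtype.ext h))
            (fun h => n1 ((induce_adj' G _ s c2).mpr h))
            (fun h => n2 ((induce_adj' G _ s c4).mpr h))
            (fun h => n3 ((induce_adj' G _ c2 c4).mpr h))

/-- Lemma: if `G` is `{K_{1,3}, Γ_i}`-free, `x` is eligible (its neighborhood induces a
connected noncomplete graph), and `F` is an induced `Γ_i` in `G*_x` (given by the graph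
embedding `f`) having a new edge `f a f b` in one of its triangles, then
`dist_{⟨N_G(x)⟩}(f a, f b) = 3`. -/
theorem statement3 {V : Type*} (i : ℕ) (hi : 1 ≤ i) (G : SimpleGraph V)
    (hclaw : ClawFree G) (hgamma : GammaFree i G) (x : V)
    (helig₁ : (G.induce (G.neighborSet x)).Connected)
    (helig₂ : ∃ a b : V, G.Adj x a ∧ G.Adj x b ∧ a ≠ b ∧ ¬ G.Adj a b)
    (f : gammaGraph i ↪g localCompletion G x)
    (a b : Fin (i + 5)) (hab : (gammaGraph i).Adj a b)
    (htri : ((a : ℕ) ≤ 2 ∧ (b : ℕ) ≤ 2) ∨ (i + 2 ≤ (a : ℕ) ∧ i + 2 ≤ (b : ℕ)))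
    (hnew : ¬ G.Adj (f a) (f b)) :
    ∀ (h₁ : f a ∈ G.neighborSet x) (h₂ : f b ∈ G.neighborSet x),
      (G.induce (G.neighborSet x)).Reachable ⟨f a, h₁⟩ ⟨f b, h₂⟩ ∧
      (G.induce (G.neighborSet x)).dist ⟨f a, h₁⟩ ⟨f b, h₂⟩ = 3 := by
  intro h₁ h₂
  have hablc : (localCompletion G x).Adj (f a) (f b) :=
    (SimpleGraph.Embedding.map_adj_iff f).mpr hab
  have hfab_ne : f a ≠ f b := hablc.ne
  have hvne : (a : ℕ) ≠ (b : ℕ) := by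
    intro h
    exact hfab_ne (congrArg f (Fin.ext h))
  -- the key consequence of Γ_i-freeness: no common neighbor of f a and f b inside N(x)
  have key2 : ∀ z : V, G.Adj x z → G.Adj z (f a) → G.Adj z (f b) → False := by
    intro z hxz hz1 hz2
    rcases htri with ⟨ha2, hb2⟩ | ⟨ha2, hb2⟩
    · -- new edge in the first triangle
      have hFadj : ∀ j k, j < k → k ≤ i + 4 →
          ((localCompletion G x).Adj (f ⟨j % (i+5), Nat.mod_lt _ (by omega)⟩)
            (f ⟨k % (i+5), Nat.mod_lt _ (by omega)⟩) ↔
          (k = j + 1 ∨ (j = 0 ∧ k = 2) ∨ (j = i + 2 ∧ k = i + 4))) := by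
        intro j k hjk hk
        rw [SimpleGraph.Embedding.map_adj_iff, gamma_adj]
        have hj' : j % (i+5) = j := Nat.mod_eq_of_lt (by omega)
        have hk' : k % (i+5) = k := Nat.mod_eq_of_lt (by omega)
        simp only [hj', hk']
        rw [gRel_char i j k hi hjk hk]
        omega
      have hFinj : ∀ j k, j < k → k ≤ i + 4 →
          (f ⟨j % (i+5), Nat.mod_lt _ (by omega)⟩ : V) ≠
            f ⟨k % (i+5), Nat.mod_lt _ (by omega)⟩ := by
        intro j k hjk hk he
        have := f.injective he
        have : j % (i+5) = k % (i+5) := congrArg Fin.val this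
        rw [Nat.mod_eq_of_lt (by omega), Nat.mod_eq_of_lt (by omega)] at this
        omega
      have hFa : (f ⟨(a : ℕ) % (i+5), Nat.mod_lt _ (by omega)⟩ : V) = f a := by
        congr 1
        exact Fin.ext (Nat.mod_eq_of_lt a.isLt)
      have hFb : (f ⟨(b : ℕ) % (i+5), Nat.mod_lt _ (by omega)⟩ : V) = f b := by
        congr 1
        exact Fin.ext (Nat.mod_eq_of_lt b.isLt)
      rcases Nat.lt_or_ge (a : ℕ) (b : ℕ) with hlt | hge
      · exact mainCore i hi G hclaw hgamma x _ hFadj hFinj (a : ℕ) (b : ℕ) hlt hb2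
          (by rw [hFa, hFb]; exact hnew) z hxz (by rw [hFa]; exact hz1) (by rw [hFb]; exact hz2)
      · exact mainCore i hi G hclaw hgamma x _ hFadj hFinj (b : ℕ) (a : ℕ) (by omega) ha2
          (by rw [hFa, hFb]; exact fun h => hnew h.symm) z hxz
          (by rw [hFb]; exact hz2) (by rw [hFa]; exact hz1)
    · -- new edge in the second triangle: reverse the indexing
      have ha4 : (a : ℕ) ≤ i + 4 := by omega
      have hb4 : (b : ℕ) ≤ i + 4 := by omega
      have hFadj : ∀ j k, j < k → k ≤ i + 4 →
          ((localCompletion G x).Adj (f ⟨(i + 4 - j) % (i+5), Nat.mod_lt _ (by omega)⟩)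
            (f ⟨(i + 4 - k) % (i+5), Nat.mod_lt _ (by omega)⟩) ↔
          (k = j + 1 ∨ (j = 0 ∧ k = 2) ∨ (j = i + 2 ∧ k = i + 4))) := by
        intro j k hjk hk
        rw [SimpleGraph.Embedding.map_adj_iff, gamma_adj]
        have hj' : (i + 4 - j) % (i+5) = i + 4 - j := Nat.mod_eq_of_lt (by omega)
        have hk' : (i + 4 - k) % (i+5) = i + 4 - k := Nat.mod_eq_of_lt (by omega)
        simp only [hj', hk']
        rw [or_comm, gRel_char i (i + 4 - k) (i + 4 - j) hi (by omega) (by omega)]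
        omega
      have hFinj : ∀ j k, j < k → k ≤ i + 4 →
          (f ⟨(i + 4 - j) % (i+5), Nat.mod_lt _ (by omega)⟩ : V) ≠
            f ⟨(i + 4 - k) % (i+5), Nat.mod_lt _ (by omega)⟩ := by
        intro j k hjk hk he
        have := f.injective he
        have : (i + 4 - j) % (i+5) = (i + 4 - k) % (i+5) := congrArg Fin.val this
        rw [Nat.mod_eq_of_lt (by omega), Nat.mod_eq_of_lt (by omega)] at this
        omega
      have hFa : (f ⟨(i + 4 - (i + 4 - (a : ℕ))) % (i+5), Nat.mod_lt _ (by omega)⟩ : V)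
          = f a := by
        congr 1
        refine Fin.ext ?_
        show (i + 4 - (i + 4 - (a : ℕ))) % (i+5) = (a : ℕ)
        rw [Nat.mod_eq_of_lt (by omega)]
        omega
      have hFb : (f ⟨(i + 4 - (i + 4 - (b : ℕ))) % (i+5), Nat.mod_lt _ (by omega)⟩ : V)
          = f b := by
        congr 1
        refine Fin.ext ?_
        show (i + 4 - (i + 4 - (b : ℕ))) % (i+5) = (b : ℕ)
        rw [Nat.mod_eq_of_lt (by omega)]
        omega
      rcases Nat.lt_or_ge (a : ℕ) (b : ℕ) with hlt | hge
      · -- reversed: i+4-b < i+4-a ≤ 2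
        exact mainCore i hi G hclaw hgamma x _ hFadj hFinj (i + 4 - (b : ℕ)) (i + 4 - (a : ℕ))
          (by omega) (by omega)
          (by rw [hFb, hFa]; exact fun h => hnew h.symm) z hxz
          (by rw [hFb]; exact hz2) (by rw [hFa]; exact hz1)
      · exact mainCore i hi G hclaw hgamma x _ hFadj hFinj (i + 4 - (a : ℕ)) (i + 4 - (b : ℕ))
          (by omega) (by omega)
          (by rw [hFa, hFb]; exact hnew) z hxz
          (by rw [hFa]; exact hz1) (by rw [hFb]; exact hz2)
  -- now the distance computation
  have hreach : (G.induce (G.neighborSet x)).Reachable ⟨f a, h₁⟩ ⟨f b, h₂⟩ :=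
    helig₁.preconnected _ _
  refine ⟨hreach, ?_⟩
  have hd3 : (G.induce (G.neighborSet x)).dist ⟨f a, h₁⟩ ⟨f b, h₂⟩ ≤ 3 :=
    dist_le_three G hclaw x _ _ hreach
  obtain ⟨p, hp⟩ := hreach.exists_walk_length_eq_dist
  have hd0 : (G.induce (G.neighborSet x)).dist ⟨f a, h₁⟩ ⟨f b, h₂⟩ ≠ 0 := by
    intro h0
    have := SimpleGraph.Walk.eq_of_length_eq_zero (hp.trans h0)
    exact hfab_ne (congrArg Subtype.val this)
  have hd1 : (G.induce (G.neighborSet x)).dist ⟨f a, h₁⟩ ⟨f b, h₂⟩ ≠ 1 := by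
    intro h1
    have := SimpleGraph.Walk.adj_of_length_eq_one (hp.trans h1)
    exact hnew ((induce_adj' G _ _ _).mp this)
  have hd2 : (G.induce (G.neighborSet x)).dist ⟨f a, h₁⟩ ⟨f b, h₂⟩ ≠ 2 := by
    intro h2
    obtain ⟨m, hm1, hm2⟩ := walk_len2 p (hp.trans h2)
    exact key2 m.1 m.2 ((induce_adj' G _ _ _).mp hm1).symm ((induce_adj' G _ _ _).mp hm2)
  omega
end

section
/- Fix i ≥ 2 and 1 ≤ j ≤ i. Let Γ_i be two vertex-disjoint triangles joined by a path of length i, with vertices labeled t_1, t_2, p_1, ..., p_{i+1}, t_3, t_4 (triangles t_1 t_2 p_1 and p_{i+1} t_3 t_4, path p_1 ... p_{i+1}). Let G be a {K_{1,3}, Γ_i}-free graph and x a nonsimplicial vertex of G such that the local completion G*_x contains an induced subgraph F ≅ Γ_i in which the path edge p_j p_{j+1} is a new edge (not in G). If z_1 and z_2 are vertices of G each adjacent in G to all three of p_j, p_{j+1}, x, then z_1 z_2 ∈ E(G). -/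
def RR (i a b : ℕ) : Prop :=
  (a = 0 ∧ b = 1) ∨ (a = 0 ∧ b = 2) ∨ (a = 1 ∧ b = 2) ∨
  (2 ≤ a ∧ b = a + 1 ∧ b ≤ i + 2) ∨ (a = i + 2 ∧ b = i + 3) ∨
  (a = i + 2 ∧ b = i + 4) ∨ (a = i + 3 ∧ b = i + 4)

lemma gamma_adj_iff (i : ℕ) (a b : Fin (i + 5)) :
    (gammaGraph i).Adj a b ↔ (a : ℕ) ≠ (b : ℕ) ∧ (RR i (a : ℕ) (b : ℕ) ∨ RR i (b : ℕ) (a : ℕ)) := by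
  rw [gammaGraph, SimpleGraph.fromRel_adj, RR, RR, ← Fin.val_ne_iff]

set_option maxHeartbeats 4000000

/-- Lemma: `G` is `{K_{1,3}, Γ_i}`-free, `x` nonsimplicial, `f` gives an induced copy `F` of
`Γ_i` in `G*_x` whose path edge `p_j p_{j+1}` is new.  If `z₁, z₂` are (distinct) vertices of
`G` adjacent in `G` to all three of `p_j`, `p_{j+1}` and `x`, then `z₁ z₂ ∈ E(G)`. -/
theorem statement4 {V : Type*} (i j : ℕ) (hi : 2 ≤ i) (hj : 1 ≤ j) (hji : j ≤ i)
    (G : SimpleGraph V) (hclaw : ClawFree G) (hgamma : GammaFree i G)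
    (x : V) (hns : ∃ a b : V, G.Adj x a ∧ G.Adj x b ∧ a ≠ b ∧ ¬ G.Adj a b)
    (f : gammaGraph i ↪g localCompletion G x)
    (hnew : ¬ G.Adj (f ⟨j + 1, by omega⟩) (f ⟨j + 2, by omega⟩))
    (z₁ z₂ : V) (hz : z₁ ≠ z₂)
    (hz₁p : G.Adj z₁ (f ⟨j + 1, by omega⟩)) (hz₁p' : G.Adj z₁ (f ⟨j + 2, by omega⟩))
    (hz₁x : G.Adj z₁ x)
    (hz₂p : G.Adj z₂ (f ⟨j + 1, by omega⟩)) (hz₂p' : G.Adj z₂ (f ⟨j + 2, by omega⟩))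
    (hz₂x : G.Adj z₂ x) :
    G.Adj z₁ z₂ := by
  by_contra h12
  have hb1 : j + 1 < i + 5 := by omega
  have hb2 : j + 2 < i + 5 := by omega
  have hbL : j < i + 5 := by omega
  have hbR : j + 3 < i + 5 := by omega
  let a1 : Fin (i + 5) := ⟨j + 1, hb1⟩
  let a2 : Fin (i + 5) := ⟨j + 2, hb2⟩
  let aL : Fin (i + 5) := ⟨j, hbL⟩
  let bR : Fin (i + 5) := ⟨j + 3, hbR⟩
  have hnew' : ¬ G.Adj (f a1) (f a2) := hnew
  have hz₁P : G.Adj z₁ (f a1) := hz₁p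
  have hz₁Q : G.Adj z₁ (f a2) := hz₁p'
  have hz₂P : G.Adj z₂ (f a1) := hz₂p
  have hz₂Q : G.Adj z₂ (f a2) := hz₂p'
  -- basic Γ facts
  have hΓ12 : (gammaGraph i).Adj a1 a2 := by
    rw [gamma_adj_iff]; simp only [RR, Fin.val_mk, a1, a2, aL, bR, true_and, and_true]; omega
  have hΓL : (gammaGraph i).Adj aL a1 := by
    rw [gamma_adj_iff]; simp only [RR, Fin.val_mk, a1, a2, aL, bR, true_and, and_true]; omega
  have hΓR : (gammaGraph i).Adj bR a2 := by
    rw [gamma_adj_iff]; simp only [RR, Fin.val_mk, a1, a2, aL, bR, true_and, and_true]; omega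
  have hne12 : a1 ≠ a2 := by rw [Fin.ne_iff_vne]; simp only [Fin.val_mk, a1, a2, aL, bR]; omega
  have hneL2 : aL ≠ a2 := by rw [Fin.ne_iff_vne]; simp only [Fin.val_mk, a1, a2, aL, bR]; omega
  have hneR1 : bR ≠ a1 := by rw [Fin.ne_iff_vne]; simp only [Fin.val_mk, a1, a2, aL, bR]; omega
  have noCommon : ∀ a : Fin (i + 5),
      ¬ ((gammaGraph i).Adj a a1 ∧ (gammaGraph i).Adj a a2) := by
    rintro a ⟨h1, h2⟩
    rw [gamma_adj_iff] at h1 h2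
    simp only [RR, Fin.val_mk, a1, a2, aL, bR, true_and, and_true] at h1 h2
    omega
  -- x is adjacent to both endpoints of the new edge
  have hloc12 : (localCompletion G x).Adj (f a1) (f a2) := f.map_rel_iff.mpr hΓ12
  obtain ⟨hx1, hx2⟩ : G.Adj x (f a1) ∧ G.Adj x (f a2) := by
    rcases hloc12.2 with h | h
    · exact absurd h hnew'
    · exact h
  -- only a1, a2 are G-neighbors of x inside F
  have hNx : ∀ a : Fin (i + 5), G.Adj x (f a) → a = a1 ∨ a = a2 := by
    intro a hxa
    by_contra hcon
    push_neg at hcon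
    have h1 : (localCompletion G x).Adj (f a) (f a1) :=
      ⟨f.injective.ne hcon.1, Or.inr ⟨hxa, hx1⟩⟩
    have h2 : (localCompletion G x).Adj (f a) (f a2) :=
      ⟨f.injective.ne hcon.2, Or.inr ⟨hxa, hx2⟩⟩
    exact noCommon a ⟨f.map_rel_iff.mp h1, f.map_rel_iff.mp h2⟩
  -- every F-edge except the new one is a G-edge
  have hGedge : ∀ a b : Fin (i + 5), (gammaGraph i).Adj a b →
      ¬ (a = a1 ∧ b = a2) → ¬ (a = a2 ∧ b = a1) → G.Adj (f a) (f b) := by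
    intro a b hab hn1 hn2
    rcases (f.map_rel_iff.mpr hab).2 with h | h
    · exact h
    · exfalso
      rcases hNx a h.1 with rfl | rfl <;> rcases hNx b h.2 with rfl | rfl
      · exact hab.ne rfl
      · exact hn1 ⟨rfl, rfl⟩
      · exact hn2 ⟨rfl, rfl⟩
      · exact hab.ne rfl
  -- F-non-edges are G-non-edges
  have hGnon : ∀ a b : Fin (i + 5), ¬ (gammaGraph i).Adj a b → a ≠ b →
      ¬ G.Adj (f a) (f b) := by
    intro a b hnab hne hGab
    exact hnab (f.map_rel_iff.mp ⟨f.injective.ne hne, Or.inl hGab⟩)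
  -- common neighbors of a1, a2 are outside F
  have hzNotF : ∀ z : V, G.Adj z (f a1) → G.Adj z (f a2) →
      ∀ a : Fin (i + 5), z ≠ f a := by
    intro z h1 h2 a heq
    subst heq
    have hne1 : a ≠ a1 := by rintro rfl; exact G.loopless.irrefl _ h1
    have hne2 : a ≠ a2 := by rintro rfl; exact G.loopless.irrefl _ h2
    exact noCommon a ⟨f.map_rel_iff.mp ⟨f.injective.ne hne1, Or.inl h1⟩,
      f.map_rel_iff.mp ⟨f.injective.ne hne2, Or.inl h2⟩⟩
  have hxNotF : ∀ a : Fin (i + 5), x ≠ f a := hzNotF x hx1 hx2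
  -- a common neighbor of a1, a2 can only see F in N(a1) ∪ N(a2)
  have hzF : ∀ z : V, G.Adj z (f a1) → G.Adj z (f a2) →
      ∀ a : Fin (i + 5), G.Adj z (f a) →
      (gammaGraph i).Adj a a1 ∨ (gammaGraph i).Adj a a2 ∨ a = a1 ∨ a = a2 := by
    intro z h1 h2 a hza
    by_contra hc
    push_neg at hc
    obtain ⟨hc1, hc2, hc3, hc4⟩ := hc
    exact hclaw z (f a1) (f a2) (f a) h1 h2 hza
      (f.injective.ne hne12) (f.injective.ne hc3.symm)
      (f.injective.ne hc4.symm) hnew'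
      (hGnon a1 a (fun h => hc1 h.symm) hc3.symm)
      (hGnon a2 a (fun h => hc2 h.symm) hc4.symm)
  -- claw at f a1 (resp. f a2): one of z₁, z₂ sees each neighbor
  have step1 : ∀ a : Fin (i + 5), (gammaGraph i).Adj a a1 → a ≠ a2 →
      G.Adj z₁ (f a) ∨ G.Adj z₂ (f a) := by
    intro a ha hne
    by_contra hc
    push_neg at hc
    exact hclaw (f a1) z₁ z₂ (f a) hz₁P.symm hz₂P.symm
      (hGedge a1 a ha.symm (fun h => hne h.2) (fun h => hne12 h.1))
      hz (hzNotF z₁ hz₁P hz₁Q a) (hzNotF z₂ hz₂P hz₂Q a)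
      h12 hc.1 hc.2
  have step1' : ∀ a : Fin (i + 5), (gammaGraph i).Adj a a2 → a ≠ a1 →
      G.Adj z₁ (f a) ∨ G.Adj z₂ (f a) := by
    intro a ha hne
    by_contra hc
    push_neg at hc
    exact hclaw (f a2) z₁ z₂ (f a) hz₁Q.symm hz₂Q.symm
      (hGedge a2 a ha.symm (fun h => hne12 h.1.symm) (fun h => hne h.2))
      hz (hzNotF z₁ hz₁P hz₁Q a) (hzNotF z₂ hz₂P hz₂Q a)
      h12 hc.1 hc.2
  -- arithmetic: a left neighbor and a right neighbor are distinct and non-adjacent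
  have harith : ∀ a b : Fin (i + 5), (gammaGraph i).Adj a a1 → a ≠ a2 →
      (gammaGraph i).Adj b a2 → b ≠ a1 → a ≠ b ∧ ¬ (gammaGraph i).Adj a b := by
    intro a b ha hna hb hnb
    rw [gamma_adj_iff] at ha hb
    rw [Fin.ne_iff_vne] at hna hnb ⊢
    constructor
    · simp only [RR, Fin.val_mk, a1, a2, aL, bR, true_and, and_true] at ha hb hna hnb ⊢; omega
    · rw [gamma_adj_iff]
      simp only [RR, Fin.val_mk, a1, a2, aL, bR, true_and, and_true] at ha hb hna hnb ⊢; omega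
  -- no common neighbor of a1, a2, x sees both a left and a right neighbor
  have step2 : ∀ z : V, G.Adj z (f a1) → G.Adj z (f a2) → G.Adj z x →
      ∀ a b : Fin (i + 5), (gammaGraph i).Adj a a1 → a ≠ a2 →
      (gammaGraph i).Adj b a2 → b ≠ a1 →
      ¬ (G.Adj z (f a) ∧ G.Adj z (f b)) := by
    rintro z h1 h2 hzx a b ha hna hb hnb ⟨hza, hzb⟩
    obtain ⟨hab, hnadj⟩ := harith a b ha hna hb hnb
    have hxa : ¬ G.Adj (f a) x := by
      intro h
      rcases hNx a h.symm with rfl | rfl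
      · exact (gammaGraph i).loopless.irrefl _ ha
      · exact hna rfl
    have hxb : ¬ G.Adj (f b) x := by
      intro h
      rcases hNx b h.symm with rfl | rfl
      · exact hnb rfl
      · exact (gammaGraph i).loopless.irrefl _ hb
    exact hclaw z (f a) (f b) x hza hzb hzx
      (f.injective.ne hab) (Ne.symm (hxNotF a)) (Ne.symm (hxNotF b))
      (hGnon a b hnadj hab) hxa hxb
  -- replacement: a common neighbor seeing all left neighbors and no right
  -- neighbor yields an induced Γ_i in G, contradiction
  have hrepl : ∀ z : V, G.Adj z (f a1) → G.Adj z (f a2) →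
      (∀ a : Fin (i + 5), (gammaGraph i).Adj a a1 → a ≠ a2 → G.Adj z (f a)) →
      (∀ a : Fin (i + 5), (gammaGraph i).Adj a a2 → a ≠ a1 → ¬ G.Adj z (f a)) →
      False := by
    intro z h1 h2 hall hnone
    have hinj : Function.Injective (fun a : Fin (i + 5) => if a = a1 then z else f a) := by
      intro a b hab
      simp only at hab
      split_ifs at hab with e1 e2 e2
      · rw [e1, e2]
      · exact absurd hab (hzNotF z h1 h2 b)
      · exact absurd hab.symm (hzNotF z h1 h2 a)
      · exact f.injective hab
    refine hgamma.false ⟨⟨fun a => if a = a1 then z else f a, hinj⟩, ?_⟩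
    intro a b
    simp only [Function.Embedding.coeFn_mk]
    rcases eq_or_ne a a1 with rfl | hea <;> rcases eq_or_ne b a1 with rfl | heb
    · simp [(gammaGraph i).loopless, G.loopless]
    · rw [if_pos rfl, if_neg heb]
      constructor
      · intro h
        rcases hzF z h1 h2 b h with hb | hb | hb | rfl
        · exact hb.symm
        · exact absurd h (hnone b hb heb)
        · exact absurd hb heb
        · exact hΓ12
      · intro h
        rcases eq_or_ne b a2 with rfl | hb2
        · exact h2
        · exact hall b h.symm hb2
    · rw [if_neg hea, if_pos rfl]
      constructor
      · intro h
        rcases hzF z h1 h2 a h.symm with ha | ha | ha | rfl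
        · exact ha
        · exact absurd h.symm (hnone a ha hea)
        · exact absurd ha hea
        · exact hΓ12.symm
      · intro h
        rcases eq_or_ne a a2 with rfl | ha2
        · exact h2.symm
        · exact (hall a h ha2).symm
    · rw [if_neg hea, if_neg heb]
      constructor
      · intro h
        exact f.map_rel_iff.mp ⟨h.ne, Or.inl h⟩
      · intro h
        exact hGedge a b h (fun hh => hea hh.1) (fun hh => heb hh.2)
  -- main combination
  have main : ∀ z w : V, G.Adj z (f a1) → G.Adj z (f a2) → G.Adj z x →
      G.Adj w (f a1) → G.Adj w (f a2) → G.Adj w x → z ≠ w → ¬ G.Adj z w →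
      G.Adj z (f aL) → False := by
    intro z w hz1 hz2 hzx hw1 hw2 hwx hzw hnzw hzL0
    have step1zw : ∀ a : Fin (i + 5), (gammaGraph i).Adj a a1 → a ≠ a2 →
        G.Adj z (f a) ∨ G.Adj w (f a) := by
      intro a ha hne
      by_contra hc
      push_neg at hc
      exact hclaw (f a1) z w (f a)
        hz1.symm hw1.symm
        (hGedge a1 a ha.symm (fun h => hne h.2) (fun h => hne12 h.1))
        hzw (hzNotF z hz1 hz2 a) (hzNotF w hw1 hw2 a)
        hnzw hc.1 hc.2
    have step1zw' : ∀ a : Fin (i + 5), (gammaGraph i).Adj a a2 → a ≠ a1 →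
        G.Adj z (f a) ∨ G.Adj w (f a) := by
      intro a ha hne
      by_contra hc
      push_neg at hc
      exact hclaw (f a2) z w (f a)
        hz2.symm hw2.symm
        (hGedge a2 a ha.symm (fun h => hne12 h.1.symm) (fun h => hne h.2))
        hzw (hzNotF z hz1 hz2 a) (hzNotF w hw1 hw2 a)
        hnzw hc.1 hc.2
    have hzR : ∀ b : Fin (i + 5), (gammaGraph i).Adj b a2 → b ≠ a1 →
        ¬ G.Adj z (f b) := fun b hb hbn hzb =>
      step2 z hz1 hz2 hzx aL b hΓL hneL2 hb hbn ⟨hzL0, hzb⟩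
    have hwR : ∀ b : Fin (i + 5), (gammaGraph i).Adj b a2 → b ≠ a1 →
        G.Adj w (f b) := fun b hb hbn =>
      (step1zw' b hb hbn).resolve_left (hzR b hb hbn)
    have hwL : ∀ a : Fin (i + 5), (gammaGraph i).Adj a a1 → a ≠ a2 →
        ¬ G.Adj w (f a) := fun a ha han hwa =>
      step2 w hw1 hw2 hwx a bR ha han hΓR hneR1 ⟨hwa, hwR bR hΓR hneR1⟩
    have hzL : ∀ a : Fin (i + 5), (gammaGraph i).Adj a a1 → a ≠ a2 →
        G.Adj z (f a) := fun a ha han =>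
      (step1zw a ha han).resolve_right (hwL a ha han)
    exact hrepl z hz1 hz2 hzL hzR
  by_cases hc : G.Adj z₁ (f aL)
  · exact main z₁ z₂ hz₁P hz₁Q hz₁x hz₂P hz₂Q hz₂x hz h12 hc
  · have hc2 : G.Adj z₂ (f aL) := (step1 aL hΓL hneL2).resolve_left hc
    exact main z₂ z₁ hz₂P hz₂Q hz₂x hz₁P hz₁Q hz₁x hz.symm
      (fun h => h12 h.symm) hc2
end

section
/- Let G be a claw-free graph, let W be an induced subgraph of G with vertex set {x, w_1, w_2, w_3, w_4} isomorphic to the 4-wheel W_4 (center x, induced 4-cycle w_1 w_2 w_3 w_4), and let z_1, z_2 ∈ N_G(x) be vertices with distance exactly 3 in the induced subgraph ⟨N_G(x)⟩. Then, after a suitable relabeling respecting the symmetries of W, the set {x, w_1, w_2, w_3, w_4, z_1, z_2} induces in G the graph R in which: x is adjacent to all of w_1, w_2, w_3, w_4, z_1, z_2; the 4-cycle w_1 w_2 w_3 w_4 is present; z_1 is adjacent to w_1 and w_2; z_2 is adjacent to w_3 and w_4; and no other edges are present among these seven vertices. -/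
/-- Lemma: a claw-free graph with an induced 4-wheel `W = ⟨{x,w₁,w₂,w₃,w₄}⟩` (center `x`)
and `z₁, z₂ ∈ N_G(x)` at distance exactly 3 in `⟨N_G(x)⟩` contains, after suitable
relabeling, the graph `R` as an induced subgraph. -/
theorem statement5 {V : Type*} (G : SimpleGraph V) (hG : ClawFree G)
    (x w₁ w₂ w₃ w₄ : V)
    (hx1 : G.Adj x w₁) (hx2 : G.Adj x w₂) (hx3 : G.Adj x w₃) (hx4 : G.Adj x w₄)
    (h12 : G.Adj w₁ w₂) (h23 : G.Adj w₂ w₃) (h34 : G.Adj w₃ w₄) (h41 : G.Adj w₄ w₁)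
    (hne13 : w₁ ≠ w₃) (hne24 : w₂ ≠ w₄)
    (h13 : ¬ G.Adj w₁ w₃) (h24 : ¬ G.Adj w₂ w₄)
    (z₁ z₂ : V) (hz₁ : z₁ ∈ G.neighborSet x) (hz₂ : z₂ ∈ G.neighborSet x)
    (hdist : (G.induce (G.neighborSet x)).dist ⟨z₁, hz₁⟩ ⟨z₂, hz₂⟩ = 3)
    (hreach : (G.induce (G.neighborSet x)).Reachable ⟨z₁, hz₁⟩ ⟨z₂, hz₂⟩) :
    ∃ a b c d u v : V,
      ({a, b, c, d} : Set V) = {w₁, w₂, w₃, w₄} ∧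
      G.Adj a b ∧ G.Adj b c ∧ G.Adj c d ∧ G.Adj d a ∧
      ((u = z₁ ∧ v = z₂) ∨ (u = z₂ ∧ v = z₁)) ∧
      G.Adj x a ∧ G.Adj x b ∧ G.Adj x c ∧ G.Adj x d ∧ G.Adj x u ∧ G.Adj x v ∧
      G.Adj u a ∧ G.Adj u b ∧ G.Adj v c ∧ G.Adj v d ∧
      ¬ G.Adj a c ∧ ¬ G.Adj b d ∧ ¬ G.Adj u c ∧ ¬ G.Adj u d ∧
      ¬ G.Adj v a ∧ ¬ G.Adj v b ∧ ¬ G.Adj u v := by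
  have hz1x : G.Adj x z₁ := hz₁
  have hz2x : G.Adj x z₂ := hz₂
  -- adjacency in the induced subgraph
  have hind : ∀ (a b : V) (ha : a ∈ G.neighborSet x) (hb : b ∈ G.neighborSet x),
      G.Adj a b → (G.induce (G.neighborSet x)).Adj ⟨a, ha⟩ ⟨b, hb⟩ := by
    intro a b ha hb h
    simpa using h
  -- z₁ and z₂ are not adjacent
  have hA : ¬ G.Adj z₁ z₂ := by
    intro h
    have hle := SimpleGraph.dist_le ((hind _ _ hz₁ hz₂ h).toWalk)
    rw [hdist] at hle
    simp at hle
  -- z₁ and z₂ have no common neighbor in N(x)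
  have hC : ∀ m, G.Adj x m → ¬ (G.Adj z₁ m ∧ G.Adj z₂ m) := by
    rintro m hm ⟨h1, h2⟩
    have hle := SimpleGraph.dist_le (SimpleGraph.Walk.cons (hind _ _ hz₁ hm h1)
      (SimpleGraph.Walk.cons (hind _ _ hm hz₂ h2.symm) SimpleGraph.Walk.nil))
    rw [hdist] at hle
    simp [SimpleGraph.Walk.length_cons] at hle
  have hC' : ∀ m, G.Adj x m → ¬ (G.Adj z₂ m ∧ G.Adj z₁ m) :=
    fun m hm h => hC m hm ⟨h.2, h.1⟩
  have hA' : ¬ G.Adj z₂ z₁ := fun h => hA h.symm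
  -- claw-freeness: a vertex of N(x) is adjacent to one of a nonadjacent pair in N(x)
  have hclaw : ∀ p q z : V, G.Adj x p → G.Adj x q → p ≠ q → ¬ G.Adj p q →
      G.Adj x z → z ≠ p → z ≠ q → G.Adj z p ∨ G.Adj z q := by
    intro p q z hp hq hpq hnpq hz hzp hzq
    by_contra hcon
    push_neg at hcon
    exact hG x z p q hz hp hq hzp hzq hpq hcon.1 hcon.2 hnpq
  -- helper: z cannot equal a wheel vertex p with cycle neighbors q, r
  have haux : ∀ z z' : V, G.Adj x z → G.Adj x z' → ¬ G.Adj z z' →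
      (∀ m, G.Adj x m → ¬ (G.Adj z m ∧ G.Adj z' m)) →
      ∀ p q r : V, G.Adj x q → G.Adj x r → G.Adj p q → G.Adj p r →
      q ≠ r → ¬ G.Adj q r → z ≠ p := by
    intro z z' hz hz' hzz' hcm p q r hq hr hpq hpr hqr hnqr hzp
    subst hzp
    have hz'q : z' ≠ q := by rintro rfl; exact hzz' hpq
    have hz'r : z' ≠ r := by rintro rfl; exact hzz' hpr
    rcases hclaw q r z' hq hr hqr hnqr hz' hz'q hz'r with h | h
    · exact hcm q hq ⟨hpq, h⟩
    · exact hcm r hr ⟨hpr, h⟩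
  have hz1w1 : z₁ ≠ w₁ := haux z₁ z₂ hz1x hz2x hA hC w₁ w₂ w₄ hx2 hx4 h12 h41.symm hne24 h24
  have hz1w2 : z₁ ≠ w₂ := haux z₁ z₂ hz1x hz2x hA hC w₂ w₁ w₃ hx1 hx3 h12.symm h23 hne13 h13
  have hz1w3 : z₁ ≠ w₃ := haux z₁ z₂ hz1x hz2x hA hC w₃ w₂ w₄ hx2 hx4 h23.symm h34 hne24 h24
  have hz1w4 : z₁ ≠ w₄ := haux z₁ z₂ hz1x hz2x hA hC w₄ w₁ w₃ hx1 hx3 h41 h34.symm hne13 h13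
  have hz2w1 : z₂ ≠ w₁ := haux z₂ z₁ hz2x hz1x hA' hC' w₁ w₂ w₄ hx2 hx4 h12 h41.symm hne24 h24
  have hz2w2 : z₂ ≠ w₂ := haux z₂ z₁ hz2x hz1x hA' hC' w₂ w₁ w₃ hx1 hx3 h12.symm h23 hne13 h13
  have hz2w3 : z₂ ≠ w₃ := haux z₂ z₁ hz2x hz1x hA' hC' w₃ w₂ w₄ hx2 hx4 h23.symm h34 hne24 h24
  have hz2w4 : z₂ ≠ w₄ := haux z₂ z₁ hz2x hz1x hA' hC' w₄ w₁ w₃ hx1 hx3 h41 h34.symm hne13 h13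
  have hz1_13 : G.Adj z₁ w₁ ∨ G.Adj z₁ w₃ := hclaw w₁ w₃ z₁ hx1 hx3 hne13 h13 hz1x hz1w1 hz1w3
  have hz1_24 : G.Adj z₁ w₂ ∨ G.Adj z₁ w₄ := hclaw w₂ w₄ z₁ hx2 hx4 hne24 h24 hz1x hz1w2 hz1w4
  have hz2_13 : G.Adj z₂ w₁ ∨ G.Adj z₂ w₃ := hclaw w₁ w₃ z₂ hx1 hx3 hne13 h13 hz2x hz2w1 hz2w3
  have hz2_24 : G.Adj z₂ w₂ ∨ G.Adj z₂ w₄ := hclaw w₂ w₄ z₂ hx2 hx4 hne24 h24 hz2x hz2w2 hz2w4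
  rcases hz1_13 with ha1 | ha3 <;> rcases hz1_24 with ha2 | ha4
  · -- z₁ ~ w₁, w₂ ; z₂ ~ w₃, w₄
    have hn21 : ¬ G.Adj z₂ w₁ := fun h => hC w₁ hx1 ⟨ha1, h⟩
    have hn22 : ¬ G.Adj z₂ w₂ := fun h => hC w₂ hx2 ⟨ha2, h⟩
    have hb3 : G.Adj z₂ w₃ := hz2_13.resolve_left hn21
    have hb4 : G.Adj z₂ w₄ := hz2_24.resolve_left hn22
    have hn13 : ¬ G.Adj z₁ w₃ := fun h => hC w₃ hx3 ⟨h, hb3⟩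
    have hn14 : ¬ G.Adj z₁ w₄ := fun h => hC w₄ hx4 ⟨h, hb4⟩
    exact ⟨w₁, w₂, w₃, w₄, z₁, z₂, rfl, h12, h23, h34, h41, Or.inl ⟨rfl, rfl⟩,
      hx1, hx2, hx3, hx4, hz1x, hz2x, ha1, ha2, hb3, hb4,
      h13, h24, hn13, hn14, hn21, hn22, hA⟩
  · -- z₁ ~ w₁, w₄ ; z₂ ~ w₂, w₃
    have hn21 : ¬ G.Adj z₂ w₁ := fun h => hC w₁ hx1 ⟨ha1, h⟩
    have hn24 : ¬ G.Adj z₂ w₄ := fun h => hC w₄ hx4 ⟨ha4, h⟩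
    have hb3 : G.Adj z₂ w₃ := hz2_13.resolve_left hn21
    have hb2 : G.Adj z₂ w₂ := hz2_24.resolve_right hn24
    have hn12 : ¬ G.Adj z₁ w₂ := fun h => hC w₂ hx2 ⟨h, hb2⟩
    have hn13 : ¬ G.Adj z₁ w₃ := fun h => hC w₃ hx3 ⟨h, hb3⟩
    refine ⟨w₄, w₁, w₂, w₃, z₁, z₂, ?_, h41, h12, h23, h34, Or.inl ⟨rfl, rfl⟩,
      hx4, hx1, hx2, hx3, hz1x, hz2x, ha4, ha1, hb2, hb3,
      fun h => h24 h.symm, h13, hn12, hn13, hn24, hn21, hA⟩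
    ext y
    simp only [Set.mem_insert_iff, Set.mem_singleton_iff]
    tauto
  · -- z₁ ~ w₂, w₃ ; z₂ ~ w₄, w₁
    have hn22 : ¬ G.Adj z₂ w₂ := fun h => hC w₂ hx2 ⟨ha2, h⟩
    have hn23 : ¬ G.Adj z₂ w₃ := fun h => hC w₃ hx3 ⟨ha3, h⟩
    have hb1 : G.Adj z₂ w₁ := hz2_13.resolve_right hn23
    have hb4 : G.Adj z₂ w₄ := hz2_24.resolve_left hn22
    have hn11 : ¬ G.Adj z₁ w₁ := fun h => hC w₁ hx1 ⟨h, hb1⟩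
    have hn14 : ¬ G.Adj z₁ w₄ := fun h => hC w₄ hx4 ⟨h, hb4⟩
    refine ⟨w₂, w₃, w₄, w₁, z₁, z₂, ?_, h23, h34, h41, h12, Or.inl ⟨rfl, rfl⟩,
      hx2, hx3, hx4, hx1, hz1x, hz2x, ha2, ha3, hb4, hb1,
      h24, fun h => h13 h.symm, hn14, hn11, hn22, hn23, hA⟩
    ext y
    simp only [Set.mem_insert_iff, Set.mem_singleton_iff]
    tauto
  · -- z₁ ~ w₃, w₄ ; z₂ ~ w₁, w₂
    have hn23 : ¬ G.Adj z₂ w₃ := fun h => hC w₃ hx3 ⟨ha3, h⟩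
    have hn24 : ¬ G.Adj z₂ w₄ := fun h => hC w₄ hx4 ⟨ha4, h⟩
    have hb1 : G.Adj z₂ w₁ := hz2_13.resolve_right hn23
    have hb2 : G.Adj z₂ w₂ := hz2_24.resolve_right hn24
    have hn11 : ¬ G.Adj z₁ w₁ := fun h => hC w₁ hx1 ⟨h, hb1⟩
    have hn12 : ¬ G.Adj z₁ w₂ := fun h => hC w₂ hx2 ⟨h, hb2⟩
    refine ⟨w₃, w₄, w₁, w₂, z₁, z₂, ?_, h34, h41, h12, h23, Or.inl ⟨rfl, rfl⟩,
      hx3, hx4, hx1, hx2, hz1x, hz2x, ha3, ha4, hb1, hb2,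
      fun h => h13 h.symm, fun h => h24 h.symm, hn11, hn12, hn23, hn24, hA⟩
    ext y
    simp only [Set.mem_insert_iff, Set.mem_singleton_iff]
    tauto
end

section
/- Let G be a claw-free graph, let x ∈ V(G), and let H be an induced subgraph of ⟨N_G(x)⟩ which is 2-connected and contains two disjoint pairs of nonadjacent vertices (i.e., there exist vertices a_1, b_1, a_2, b_2 ∈ V(H), all distinct, with a_1 b_1 ∉ E(G) and a_2 b_2 ∉ E(G)). Then x is locally 2-connected in G, i.e., the induced subgraph ⟨N_G(x)⟩ is 2-connected. -/
/-- A graph is 2-connected: it has at least 3 vertices and deleting any single vertex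
leaves it connected. -/
def TwoConnected {α : Type*} (G : SimpleGraph α) : Prop :=
  (∃ a b c : α, a ≠ b ∧ a ≠ c ∧ b ≠ c) ∧
  ∀ v : α, (G.induce {u | u ≠ v}).Connected

lemma exists_third {α : Type*} {a b c : α} (hab : a ≠ b) (hac : a ≠ c) (hbc : b ≠ c)
    (p q : α) : ∃ w, w ≠ p ∧ w ≠ q := by
  by_cases h1 : a ≠ p ∧ a ≠ q
  · exact ⟨a, h1⟩
  by_cases h2 : b ≠ p ∧ b ≠ q
  · exact ⟨b, h2⟩
  push_neg at h1 h2
  refine ⟨c, ?_, ?_⟩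
  · rintro rfl
    exact hab ((h1 hac).trans (h2 hbc).symm)
  · rintro rfl
    have hap : a = p := by by_contra h; exact hac (h1 h)
    have hbp : b = p := by by_contra h; exact hbc (h2 h)
    exact hab (hap.trans hbp.symm)

lemma twoConnected_connected {α : Type*} {H : SimpleGraph α} (h : TwoConnected H) :
    H.Connected := by
  obtain ⟨⟨a, b, c, hab, hac, hbc⟩, h2⟩ := h
  haveI : Nonempty α := ⟨a⟩
  refine SimpleGraph.Connected.mk fun p q => ?_
  obtain ⟨w, hwp, hwq⟩ := exists_third hab hac hbc p q
  exact ((h2 w).preconnected ⟨p, hwp.symm⟩ ⟨q, hwq.symm⟩).map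
    (⟨fun u => ↑u, fun {u v} huv => huv⟩ : (H.induce {u | u ≠ w}) →g H)

/-- Lemma: if `G` is claw-free and some induced subgraph `H = ⟨s⟩` of `⟨N_G(x)⟩` is
2-connected and contains two disjoint pairs of nonadjacent vertices, then `x` is
locally 2-connected, i.e. `⟨N_G(x)⟩` is 2-connected. -/
theorem statement18 {V : Type*} (G : SimpleGraph V) (hG : ClawFree G) (x : V)
    (s : Set V) (hs : s ⊆ G.neighborSet x)
    (hH : TwoConnected (G.induce s))
    (a₁ b₁ a₂ b₂ : V) (ha₁ : a₁ ∈ s) (hb₁ : b₁ ∈ s) (ha₂ : a₂ ∈ s) (hb₂ : b₂ ∈ s)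
    (hdist : a₁ ≠ b₁ ∧ a₁ ≠ a₂ ∧ a₁ ≠ b₂ ∧ b₁ ≠ a₂ ∧ b₁ ≠ b₂ ∧ a₂ ≠ b₂)
    (hn₁ : ¬ G.Adj a₁ b₁) (hn₂ : ¬ G.Adj a₂ b₂) :
    TwoConnected (G.induce (G.neighborSet x)) := by
  obtain ⟨h12, h13, h14, h23, h24, h34⟩ := hdist
  set N : Set V := G.neighborSet x with hN
  constructor
  · exact ⟨⟨a₁, hs ha₁⟩, ⟨b₁, hs hb₁⟩, ⟨a₂, hs ha₂⟩,
      fun h => h12 (congrArg Subtype.val h),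
      fun h => h13 (congrArg Subtype.val h),
      fun h => h23 (congrArg Subtype.val h)⟩
  intro v
  set K := (G.induce N).induce {u | u ≠ v} with hK
  -- every vertex of N not in s and ≠ v has a neighbor in s distinct from v
  have key : ∀ y : V, y ∈ N → y ∉ s → ∃ z ∈ s, z ≠ ↑(v : ↥N) ∧ G.Adj y z := by
    intro y hyN hys
    have hy1 : y ≠ a₁ := fun h => hys (h ▸ ha₁)
    have hy2 : y ≠ b₁ := fun h => hys (h ▸ hb₁)
    have hy3 : y ≠ a₂ := fun h => hys (h ▸ ha₂)
    have hy4 : y ≠ b₂ := fun h => hys (h ▸ hb₂)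
    have hz1 : G.Adj y a₁ ∨ G.Adj y b₁ := by
      by_contra hc
      push_neg at hc
      exact hG x a₁ b₁ y (hs ha₁) (hs hb₁) hyN h12 hy1.symm hy2.symm hn₁
        (fun h => hc.1 h.symm) (fun h => hc.2 h.symm)
    have hz2 : G.Adj y a₂ ∨ G.Adj y b₂ := by
      by_contra hc
      push_neg at hc
      exact hG x a₂ b₂ y (hs ha₂) (hs hb₂) hyN h34 hy3.symm hy4.symm hn₂
        (fun h => hc.1 h.symm) (fun h => hc.2 h.symm)
    obtain ⟨z₁, hz₁s, hz₁ne, hadj₁⟩ : ∃ z ∈ s, (z = a₁ ∨ z = b₁) ∧ G.Adj y z := by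
      rcases hz1 with h | h
      · exact ⟨a₁, ha₁, Or.inl rfl, h⟩
      · exact ⟨b₁, hb₁, Or.inr rfl, h⟩
    obtain ⟨z₂, hz₂s, hz₂ne, hadj₂⟩ : ∃ z ∈ s, (z = a₂ ∨ z = b₂) ∧ G.Adj y z := by
      rcases hz2 with h | h
      · exact ⟨a₂, ha₂, Or.inl rfl, h⟩
      · exact ⟨b₂, hb₂, Or.inr rfl, h⟩
    have hzz : z₁ ≠ z₂ := by
      rcases hz₁ne with rfl | rfl <;> rcases hz₂ne with rfl | rfl <;> assumption
    rcases eq_or_ne z₁ ↑(v : ↥N) with rfl | h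
    · exact ⟨z₂, hz₂s, fun h => hzz h.symm, hadj₂⟩
    · exact ⟨z₁, hz₁s, h, hadj₁⟩
  -- reachability in K between vertices coming from s
  have hsreach : ∀ (p q : V) (hp : p ∈ s) (hq : q ∈ s) (hpv : p ≠ ↑(v : ↥N))
      (hqv : q ≠ ↑(v : ↥N)),
      K.Reachable ⟨⟨p, hs hp⟩, fun h => hpv (congrArg Subtype.val h)⟩
        ⟨⟨q, hs hq⟩, fun h => hqv (congrArg Subtype.val h)⟩ := by
    intro p q hp hq hpv hqv
    by_cases hv : ↑(v : ↥N) ∈ s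
    · -- remove v from s and use 2-connectivity
      set w : ↥s := ⟨↑(v : ↥N), hv⟩ with hw
      have hp' : (⟨p, hp⟩ : ↥s) ≠ w := fun h => hpv (congrArg Subtype.val h)
      have hq' : (⟨q, hq⟩ : ↥s) ≠ w := fun h => hqv (congrArg Subtype.val h)
      exact ((hH.2 w).preconnected ⟨⟨p, hp⟩, hp'⟩ ⟨⟨q, hq⟩, hq'⟩).map
        (⟨fun u => ⟨⟨((u : ↥s) : V), hs (u : ↥s).2⟩,
          fun h => u.2 (Subtype.val_injective
            (congrArg (Subtype.val : ↥N → V) h))⟩,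
          fun {a b} hab => hab⟩ :
          ((G.induce s).induce {u | u ≠ w}) →g K)
    · -- v is not in s; all of s avoids v
      exact ((twoConnected_connected hH).preconnected ⟨p, hp⟩ ⟨q, hq⟩).map
        (⟨fun u => ⟨⟨↑u, hs u.2⟩,
          fun h => hv ((congrArg (Subtype.val : ↥N → V) h) ▸ u.2)⟩,
          fun {a b} hab => hab⟩ : (G.induce s) →g K)
  -- every vertex of K reaches a vertex from s
  have step : ∀ p : {u : ↥N // u ≠ v},
      ∃ (p' : V) (hp' : p' ∈ s) (hpv : p' ≠ ↑(v : ↥N)),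
        K.Reachable p ⟨⟨p', hs hp'⟩, fun h => hpv (congrArg Subtype.val h)⟩ := by
    intro p
    by_cases hps : ↑↑p ∈ s
    · refine ⟨↑↑p, hps, fun h => p.2 (Subtype.ext h), ?_⟩
      have : p = ⟨⟨↑↑p, hs hps⟩, fun h => p.2 (Subtype.ext (congrArg Subtype.val h))⟩ :=
        Subtype.ext (Subtype.ext rfl)
      exact this ▸ SimpleGraph.Reachable.refl _
    · obtain ⟨z, hzs, hzv, hadj⟩ := key ↑↑p (↑p : ↥N).2 hps
      refine ⟨z, hzs, hzv, ?_⟩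
      have : K.Adj p ⟨⟨z, hs hzs⟩, fun h => hzv (congrArg Subtype.val h)⟩ := hadj
      exact this.reachable
  have hne : Nonempty ↑{u : ↥N | u ≠ v} := by
    rcases eq_or_ne a₁ ↑(v : ↥N) with h | h
    · exact ⟨⟨⟨a₂, hs ha₂⟩, fun hh => h13 (h ▸ (congrArg Subtype.val hh).symm ▸ rfl)⟩⟩
    · exact ⟨⟨⟨a₁, hs ha₁⟩, fun hh => h (congrArg Subtype.val hh)⟩⟩
  haveI := hne
  refine SimpleGraph.Connected.mk fun p q => ?_
  obtain ⟨p', hp's, hp'v, hpr⟩ := step p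
  obtain ⟨q', hq's, hq'v, hqr⟩ := step q
  exact hpr.trans ((hsreach p' q' hp's hq's hp'v hq'v).trans hqr.symm)
end
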